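/- Let Δ : ℕ^(2) ↠ [k] be a surjective colouring, n ≥ 2, and let X = (X₁,...,Xₙ) be an n-homogeneous tuple with respect to Δ whose rank is minimal in the lexicographic order among all n-homogeneous tuples with respect to Δ. Suppose N_Δ(v, X̄ₙ) = ∅ for some v ∈ ℕ \ X̄ₙ. Then there exists an n-homogeneous tuple X' and an index j ∈ [n] such that X'ⱼ = Xⱼ ∪ {v} and X'ᵢ = Xᵢ for all 1 ≤ i ≤ n with i ≠ j. -/
import Mathlib


/-- The colour of the unordered edge `{x, y}` (only values on distinct pairs matter). -/
def edgeCol (Δ : ℕ → ℕ → ℕ) (x y : ℕ) : ℕ := Δ (min x y) (max x y)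

/-- `colourSet Δ X` is the set of colours attained by `Δ` on edges with both endpoints in `X`. -/
def colourSet (Δ : ℕ → ℕ → ℕ) (X : Set ℕ) : Set ℕ :=
  {c | ∃ x ∈ X, ∃ y ∈ X, x ≠ y ∧ edgeCol Δ x y = c}

/-- `Δ` is a surjective colouring `ℕ^(2) ↠ [k]` of the edges of the complete
graph on `ℕ` with colour set `[k] = {1, …, k}`. -/
def IsColouring (Δ : ℕ → ℕ → ℕ) (k : ℕ) : Prop :=
  (∀ x y : ℕ, x ≠ y → edgeCol Δ x y ∈ Finset.Icc 1 k) ∧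
  (∀ c ∈ Finset.Icc 1 k, ∃ x y : ℕ, x ≠ y ∧ edgeCol Δ x y = c)

/-- `F_Δ`: the set of `m ∈ [k]` for which some infinite `X ⊆ ℕ` is exactly `m`-coloured. -/
def FSet (Δ : ℕ → ℕ → ℕ) (k : ℕ) : Set ℕ :=
  {m | m ∈ Finset.Icc 1 k ∧ ∃ X : Set ℕ, X.Infinite ∧ (colourSet Δ X).ncard = m}

/-- `N_Δ(v, X)`: the set of new colours from `v` into `X`, i.e. colours appearing on some
edge from `v` to `X` but on no edge inside `X`. -/
def newCols (Δ : ℕ → ℕ → ℕ) (v : ℕ) (X : Set ℕ) : Set ℕ :=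
  {c | (∃ x ∈ X, x ≠ v ∧ edgeCol Δ v x = c) ∧ c ∉ colourSet Δ X}

/-- `X̄ᵢ = X₀ ∪ X₁ ∪ ⋯ ∪ Xᵢ` (0-indexed). -/
def barU (X : ℕ → Set ℕ) (i : ℕ) : Set ℕ := ⋃ j ≤ i, X j

/-- The tuple `(X 0, …, X (n-1))` is `n`-homogeneous with respect to `Δ` (0-indexed):
the sets are nonempty and pairwise disjoint; `X 0` is infinite and exactly 1-coloured;
the colour sets of the partial unions form a strictly increasing chain; every vertex of
`X (i+1)` sees exactly the colours of `Δ(X̄ᵢ₊₁^(2)) \ Δ(X̄ᵢ^(2))` as new colours into `X̄ᵢ`;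
and the full union spans at most `n(n-1)/2 + 1` colours. -/
def Homog (Δ : ℕ → ℕ → ℕ) (n : ℕ) (X : ℕ → Set ℕ) : Prop :=
  (∀ i < n, (X i).Nonempty) ∧
  (∀ i < n, ∀ j < n, i ≠ j → Disjoint (X i) (X j)) ∧
  ((X 0).Infinite ∧ (colourSet Δ (X 0)).ncard = 1) ∧
  (∀ i, i + 1 < n → colourSet Δ (barU X i) ⊂ colourSet Δ (barU X (i + 1))) ∧
  (∀ i, i + 1 < n → ∀ v ∈ X (i + 1),
      newCols Δ v (barU X i) = colourSet Δ (barU X (i + 1)) \ colourSet Δ (barU X i)) ∧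
  ((colourSet Δ (barU X (n - 1))).Finite ∧
    (colourSet Δ (barU X (n - 1))).ncard ≤ n * (n - 1) / 2 + 1)

/-- The rank of an `n`-homogeneous tuple: by condition (4) its `i`-th entry
`|N_Δ(v, X̄ᵢ)|` (for any `v ∈ Xᵢ₊₁`) equals `|Δ(X̄ᵢ₊₁^(2)) \ Δ(X̄ᵢ^(2))|`. -/
noncomputable def rank (Δ : ℕ → ℕ → ℕ) (X : ℕ → Set ℕ) (i : ℕ) : ℕ :=
  (colourSet Δ (barU X (i + 1)) \ colourSet Δ (barU X i)).ncard

/-- `r` precedes `s` in the lexicographic order on `ℕ^m` (first `m` coordinates). -/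
def LexLT (m : ℕ) (r s : ℕ → ℕ) : Prop :=
  ∃ i < m, (∀ j < i, r j = s j) ∧ r i < s i

lemma edgeCol_symm (Δ : ℕ → ℕ → ℕ) (x y : ℕ) : edgeCol Δ x y = edgeCol Δ y x := by
  unfold edgeCol; rw [min_comm, max_comm]

/-- colours of edges from `v` into `A`. -/
def toCols (Δ : ℕ → ℕ → ℕ) (v : ℕ) (A : Set ℕ) : Set ℕ :=
  {c | ∃ x ∈ A, x ≠ v ∧ edgeCol Δ v x = c}

lemma newCols_eq (Δ : ℕ → ℕ → ℕ) (v : ℕ) (A : Set ℕ) :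
    newCols Δ v A = toCols Δ v A \ colourSet Δ A := rfl

lemma colourSet_mono (Δ : ℕ → ℕ → ℕ) {A B : Set ℕ} (h : A ⊆ B) :
    colourSet Δ A ⊆ colourSet Δ B := by
  rintro c ⟨x, hx, y, hy, hxy, hc⟩; exact ⟨x, h hx, y, h hy, hxy, hc⟩

lemma toCols_union (Δ : ℕ → ℕ → ℕ) (v : ℕ) (A B : Set ℕ) :
    toCols Δ v (A ∪ B) = toCols Δ v A ∪ toCols Δ v B := by
  ext c; constructor
  · rintro ⟨x, hx | hx, hxv, hc⟩
    · exact Or.inl ⟨x, hx, hxv, hc⟩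
    · exact Or.inr ⟨x, hx, hxv, hc⟩
  · rintro (⟨x, hx, hxv, hc⟩ | ⟨x, hx, hxv, hc⟩)
    · exact ⟨x, Or.inl hx, hxv, hc⟩
    · exact ⟨x, Or.inr hx, hxv, hc⟩

lemma toCols_sing (Δ : ℕ → ℕ → ℕ) {v w : ℕ} (h : w ≠ v) :
    toCols Δ v {w} = {edgeCol Δ v w} := by
  ext c; constructor
  · rintro ⟨x, rfl, hxv, hc⟩; exact hc ▸ rfl
  · rintro rfl; exact ⟨w, rfl, h, rfl⟩

lemma colourSet_union_sing (Δ : ℕ → ℕ → ℕ) (v : ℕ) (A : Set ℕ) :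
    colourSet Δ (A ∪ {v}) = colourSet Δ A ∪ toCols Δ v A := by
  ext c; constructor
  · rintro ⟨x, hx, y, hy, hxy, hc⟩
    rcases hx with hx | rfl
    · rcases hy with hy | rfl
      · exact Or.inl ⟨x, hx, y, hy, hxy, hc⟩
      · exact Or.inr ⟨x, hx, hxy, by rw [edgeCol_symm]; exact hc⟩
    · rcases hy with hy | rfl
      · exact Or.inr ⟨y, hy, fun h => hxy h.symm, hc⟩
      · exact absurd rfl hxy
  · rintro (⟨x, hx, y, hy, hxy, hc⟩ | ⟨x, hx, hxv, hc⟩)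
    · exact ⟨x, Or.inl hx, y, Or.inl hy, hxy, hc⟩
    · exact ⟨v, Or.inr rfl, x, Or.inl hx, fun h => hxv h.symm, hc⟩

lemma mem_barU {X : ℕ → Set ℕ} {i x : ℕ} : x ∈ barU X i ↔ ∃ l ≤ i, x ∈ X l := by
  simp [barU]

lemma barU_mono {X : ℕ → Set ℕ} {i i' : ℕ} (h : i ≤ i') : barU X i ⊆ barU X i' := by
  intro x hx
  rw [mem_barU] at *
  obtain ⟨l, hl, h'⟩ := hx
  exact ⟨l, hl.trans h, h'⟩

lemma subset_barU (X : ℕ → Set ℕ) {l i : ℕ} (h : l ≤ i) : X l ⊆ barU X i :=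
  fun _ hx => mem_barU.2 ⟨l, h, hx⟩

lemma barU_zero (X : ℕ → Set ℕ) : barU X 0 = X 0 := by
  ext x; simp [mem_barU]

lemma barU_congr {X Y : ℕ → Set ℕ} {i : ℕ} (h : ∀ l ≤ i, X l = Y l) :
    barU X i = barU Y i := by
  ext x; simp only [mem_barU]
  constructor
  · rintro ⟨l, hl, hx⟩; exact ⟨l, hl, (h l hl) ▸ hx⟩
  · rintro ⟨l, hl, hx⟩; exact ⟨l, hl, (h l hl).symm ▸ hx⟩

lemma absorb_lemma (Δ : ℕ → ℕ → ℕ) (n : ℕ) (hn : 2 ≤ n) (X : ℕ → Set ℕ)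
    (hX : Homog Δ n X) (v : ℕ) (hv : v ∉ barU X (n - 1)) (j : ℕ) (hjle : j ≤ n - 1)
    (htC : ∀ i, j ≤ i → i ≤ n - 1 → toCols Δ v (barU X i) ⊆ colourSet Δ (barU X i))
    (hcnd : j = 0 ∨ newCols Δ v (barU X (j - 1)) =
        colourSet Δ (barU X j) \ colourSet Δ (barU X (j - 1))) :
    ∃ X' : ℕ → Set ℕ, Homog Δ n X' ∧ ∃ jj < n, X' jj = X jj ∪ {v} ∧
      ∀ i < n, i ≠ jj → X' i = X i := by
  obtain ⟨hne, hdisj, ⟨hinf, hone⟩, hchain, hcond4, hfin, hcard⟩ := hX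
  have hvX : ∀ i, i ≤ n - 1 → v ∉ X i := fun i hi h => hv (subset_barU X hi h)
  set X' : ℕ → Set ℕ := fun i => if i = j then X j ∪ {v} else X i with hX'def
  have hX'j : X' j = X j ∪ {v} := by simp [hX'def]
  have hX'ne : ∀ i, i ≠ j → X' i = X i := fun i h => by simp [hX'def, h]
  have hbar_lt : ∀ i, i < j → barU X' i = barU X i :=
    fun i hi => barU_congr fun l hl => hX'ne l (by omega)
  have hbar_ge : ∀ i, j ≤ i → barU X' i = barU X i ∪ {v} := by
    intro i hi
    ext x
    simp only [mem_barU, Set.mem_union, Set.mem_singleton_iff]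
    constructor
    · rintro ⟨l, hl, hx⟩
      by_cases h : l = j
      · rw [h, hX'j] at hx
        rcases hx with hx | hx
        · exact Or.inl ⟨j, by omega, hx⟩
        · exact Or.inr hx
      · rw [hX'ne l h] at hx
        exact Or.inl ⟨l, hl, hx⟩
    · rintro (⟨l, hl, hx⟩ | rfl)
      · by_cases h : l = j
        · exact ⟨l, hl, by rw [h, hX'j]; exact Or.inl (h ▸ hx)⟩
        · exact ⟨l, hl, by rw [hX'ne l h]; exact hx⟩
      · exact ⟨j, hi, by rw [hX'j]; exact Or.inr rfl⟩
  have hcol : ∀ i, i ≤ n - 1 → colourSet Δ (barU X' i) = colourSet Δ (barU X i) := by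
    intro i hi
    rcases Nat.lt_or_ge i j with h | h
    · rw [hbar_lt i h]
    · rw [hbar_ge i h, colourSet_union_sing, Set.union_eq_left.mpr (htC i h hi)]
  refine ⟨X', ⟨?_, ?_, ⟨?_, ?_⟩, ?_, ?_, ?_, ?_⟩, j, by omega, hX'j, fun i _ h => hX'ne i h⟩
  · -- nonempty
    intro i hi
    by_cases h : i = j
    · rw [h, hX'j]; exact ⟨v, Or.inr rfl⟩
    · rw [hX'ne i h]; exact hne i hi
  · -- disjoint
    intro i hi i' hi' hii'
    rw [Set.disjoint_left]
    intro a ha ha'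
    have key : ∀ m, m < n → a ∈ X' m → a ∈ X m ∨ (m = j ∧ a = v) := by
      intro m hm ham
      by_cases h : m = j
      · rw [h, hX'j] at ham
        rcases ham with h' | h'
        · exact Or.inl (h ▸ h')
        · exact Or.inr ⟨h, h'⟩
      · rw [hX'ne m h] at ham; exact Or.inl ham
    rcases key i hi ha with h1 | ⟨hij, rfl⟩
    · rcases key i' hi' ha' with h2 | ⟨hij', rfl⟩
      · exact Set.disjoint_left.mp (hdisj i hi i' hi' hii') h1 h2
      · exact hvX i (by omega) h1
    · rcases key i' hi' ha' with h2 | ⟨hij', _⟩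
      · exact hvX i' (by omega) h2
      · exact hii' (hij.trans hij'.symm)
  · -- X' 0 infinite
    by_cases h : j = 0
    · rw [show X' 0 = X 0 ∪ {v} from h ▸ hX'j]
      exact hinf.mono Set.subset_union_left
    · rw [hX'ne 0 (by omega)]; exact hinf
  · -- 1-coloured
    by_cases h : j = 0
    · rw [show X' 0 = X 0 ∪ {v} from h ▸ hX'j, colourSet_union_sing]
      have hsub : toCols Δ v (X 0) ⊆ colourSet Δ (X 0) := by
        have h0 := htC 0 (by omega) (by omega)
        rwa [barU_zero] at h0
      rw [Set.union_eq_left.mpr hsub]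
      exact hone
    · rw [hX'ne 0 (by omega)]; exact hone
  · -- chain
    intro i hi
    rw [hcol i (by omega), hcol (i + 1) (by omega)]
    exact hchain i hi
  · -- condition (4)
    intro i hi w hw
    rw [hcol i (by omega), hcol (i + 1) (by omega)]
    rcases Nat.lt_or_ge i j with h | h
    · rw [hbar_lt i h]
      by_cases h1 : i + 1 = j
      · rw [h1, hX'j] at hw
        rcases hw with hw | hw
        · exact hcond4 i hi w (by rw [h1]; exact hw)
        · have hwv : w = v := hw
          rcases hcnd with h0 | hcnd
          · omega
          · rw [hwv]
            have hji : j - 1 = i := by omega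
            rw [hji, ← h1] at hcnd
            exact hcnd
      · rw [hX'ne (i + 1) h1] at hw
        exact hcond4 i hi w hw
    · have h1 : i + 1 ≠ j := by omega
      rw [hX'ne (i + 1) h1] at hw
      have hwv : w ≠ v := fun hh => hvX (i + 1) (by omega) (hh ▸ hw)
      rw [hbar_ge i h]
      have hcolA : colourSet Δ (barU X i ∪ {v}) = colourSet Δ (barU X i) := by
        have := hcol i (by omega)
        rwa [hbar_ge i h] at this
      rw [newCols_eq, toCols_union, toCols_sing Δ (show v ≠ w from fun hh => hwv hh.symm),
        hcolA, Set.union_diff_distrib]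
      have h4 : toCols Δ w (barU X i) \ colourSet Δ (barU X i)
          = colourSet Δ (barU X (i + 1)) \ colourSet Δ (barU X i) := by
        rw [← newCols_eq]; exact hcond4 i hi w hw
      rw [h4, Set.union_eq_left]
      rintro c ⟨hc1, hc2⟩
      have hcw : edgeCol Δ w v ∈ colourSet Δ (barU X (i + 1)) := by
        have hmem : edgeCol Δ v w ∈ toCols Δ v (barU X (i + 1)) :=
          ⟨w, subset_barU X le_rfl hw, hwv, rfl⟩
        have := htC (i + 1) (by omega) (by omega) hmem
        rwa [edgeCol_symm] at this
      exact ⟨by rw [Set.mem_singleton_iff.mp hc1]; exact hcw, hc2⟩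
  · rw [hcol (n - 1) le_rfl]; exact hfin
  · rw [hcol (n - 1) le_rfl]; exact hcard

lemma shift_lemma (Δ : ℕ → ℕ → ℕ) (n : ℕ) (hn : 2 ≤ n) (X : ℕ → Set ℕ)
    (hX : Homog Δ n X) (v : ℕ) (hv : v ∉ barU X (n - 1)) (j : ℕ)
    (hj1 : 1 ≤ j) (hjle : j ≤ n - 1)
    (htC : ∀ i, j ≤ i → i ≤ n - 1 → toCols Δ v (barU X i) ⊆ colourSet Δ (barU X i))
    (hNne : newCols Δ v (barU X (j - 1)) ≠ ∅)
    (hgood : newCols Δ v (barU X (j - 1)) ≠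
        colourSet Δ (barU X j) \ colourSet Δ (barU X (j - 1))) :
    ∃ Y : ℕ → Set ℕ, Homog Δ n Y ∧ LexLT (n - 1) (rank Δ Y) (rank Δ X) := by
  obtain ⟨hne, hdisj, ⟨hinf, hone⟩, hchain, hcond4, hfin, hcard⟩ := hX
  have hvX : ∀ i, i ≤ n - 1 → v ∉ X i := fun i hi h => hv (subset_barU X hi h)
  have hNsub : newCols Δ v (barU X (j - 1)) ⊆
      colourSet Δ (barU X j) \ colourSet Δ (barU X (j - 1)) := by
    rintro c ⟨⟨x, hx, hxv, hc⟩, hnc⟩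
    exact ⟨htC j le_rfl hjle ⟨x, barU_mono (by omega) hx, hxv, hc⟩, hnc⟩
  set Y : ℕ → Set ℕ :=
    fun i => if i < j then X i else if i = j then ({v} : Set ℕ) else X (i - 1) with hYdef
  have hYlt : ∀ i, i < j → Y i = X i := fun i h => by simp [hYdef, h]
  have hYj : Y j = {v} := by simp [hYdef]
  have hYgt : ∀ i, j < i → Y i = X (i - 1) := fun i h => by
    simp [hYdef, show ¬ i < j by omega, show i ≠ j by omega]
  have hYbar_lt : ∀ i, i < j → barU Y i = barU X i :=
    fun i hi => barU_congr fun l hl => hYlt l (by omega)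
  have hYbar_ge : ∀ i, j ≤ i → barU Y i = barU X (i - 1) ∪ {v} := by
    intro i hi
    ext x
    simp only [mem_barU, Set.mem_union, Set.mem_singleton_iff]
    constructor
    · rintro ⟨l, hl, hx⟩
      rcases Nat.lt_trichotomy l j with h | h | h
      · rw [hYlt l h] at hx; exact Or.inl ⟨l, by omega, hx⟩
      · rw [h, hYj] at hx; exact Or.inr hx
      · rw [hYgt l h] at hx; exact Or.inl ⟨l - 1, by omega, hx⟩
    · rintro (⟨l, hl, hx⟩ | rfl)
      · rcases Nat.lt_or_ge l j with h | h
        · exact ⟨l, by omega, by rw [hYlt l h]; exact hx⟩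
        · exact ⟨l + 1, by omega, by rw [hYgt (l + 1) (by omega)]; simpa using hx⟩
      · exact ⟨j, hi, by rw [hYj]; rfl⟩
  have hYcol_lt : ∀ i, i < j → colourSet Δ (barU Y i) = colourSet Δ (barU X i) :=
    fun i hi => by rw [hYbar_lt i hi]
  have hYcolj : colourSet Δ (barU Y j) =
      colourSet Δ (barU X (j - 1)) ∪ newCols Δ v (barU X (j - 1)) := by
    rw [hYbar_ge j le_rfl, colourSet_union_sing, newCols_eq, Set.union_diff_self]
  have hYcol_gt : ∀ i, j < i → i ≤ n - 1 →
      colourSet Δ (barU Y i) = colourSet Δ (barU X (i - 1)) := by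
    intro i h1 h2
    rw [hYbar_ge i (by omega), colourSet_union_sing,
      Set.union_eq_left.mpr (htC (i - 1) (by omega) (by omega))]
  have hsubY : colourSet Δ (barU Y (n - 1)) ⊆ colourSet Δ (barU X (n - 1)) := by
    rcases Nat.lt_or_eq_of_le hjle with h | h
    · rw [hYcol_gt (n - 1) h le_rfl]
      exact colourSet_mono Δ (barU_mono (by omega))
    · rw [← h, hYcolj]
      apply Set.union_subset
      · exact colourSet_mono Δ (barU_mono (by omega))
      · exact (hNsub.trans Set.diff_subset).trans (colourSet_mono Δ (barU_mono (by omega)))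
  refine ⟨Y, ⟨?_, ?_, ⟨?_, ?_⟩, ?_, ?_, ?_, ?_⟩, ?_⟩
  · -- nonempty
    intro i hi
    rcases Nat.lt_trichotomy i j with h | h | h
    · rw [hYlt i h]; exact hne i hi
    · rw [h, hYj]; exact ⟨v, rfl⟩
    · rw [hYgt i h]; exact hne (i - 1) (by omega)
  · -- disjoint
    intro i hi i' hi' hii'
    rw [Set.disjoint_left]
    intro a ha ha'
    have key : ∀ m, m < n → a ∈ Y m → (m = j ∧ a = v) ∨
        (∃ p, p ≤ n - 1 ∧ a ∈ X p ∧ ((m < j ∧ p = m) ∨ (j < m ∧ p = m - 1))) := by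
      intro m hm ham
      rcases Nat.lt_trichotomy m j with h | h | h
      · rw [hYlt m h] at ham; exact Or.inr ⟨m, by omega, ham, Or.inl ⟨h, rfl⟩⟩
      · rw [h, hYj] at ham; exact Or.inl ⟨h, ham⟩
      · rw [hYgt m h] at ham; exact Or.inr ⟨m - 1, by omega, ham, Or.inr ⟨h, rfl⟩⟩
    rcases key i hi ha with ⟨h1, rfl⟩ | ⟨p, hp, hap, hcase⟩
    · rcases key i' hi' ha' with ⟨h1', _⟩ | ⟨p, hp, hap, _⟩
      · omega
      · exact hvX p hp hap
    · rcases key i' hi' ha' with ⟨h1', rfl⟩ | ⟨q, hq, haq, hcase'⟩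
      · exact hvX p hp hap
      · have hpq : p ≠ q := by omega
        exact Set.disjoint_left.mp (hdisj p (by omega) q (by omega) hpq) hap haq
  · rw [hYlt 0 (by omega)]; exact hinf
  · rw [hYlt 0 (by omega)]; exact hone
  · -- chain
    intro i hi
    rcases Nat.lt_trichotomy (i + 1) j with h | h | h
    · rw [hYcol_lt i (by omega), hYcol_lt (i + 1) h]
      exact hchain i (by omega)
    · rw [hYcol_lt i (by omega), h, hYcolj]
      have hji : j - 1 = i := by omega
      rw [hji]
      refine Set.ssubset_iff_subset_ne.mpr ⟨Set.subset_union_left, ?_⟩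
      intro heq
      have hne' : newCols Δ v (barU X i) ≠ ∅ := by rw [← hji]; exact hNne
      obtain ⟨c, hc⟩ := Set.nonempty_iff_ne_empty.mpr hne'
      obtain ⟨hc1, hc2⟩ := hc
      exact hc2 (heq ▸ (Or.inr ⟨hc1, hc2⟩ : c ∈ colourSet Δ (barU X i) ∪ newCols Δ v (barU X i)))
    · rcases Nat.lt_or_ge j i with h' | h'
      · rw [hYcol_gt i h' (by omega), hYcol_gt (i + 1) (by omega) (by omega)]
        have e : i + 1 - 1 = i := by omega
        rw [e]
        have e2 : i - 1 + 1 = i := by omega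
        have := hchain (i - 1) (by omega)
        rwa [e2] at this
      · have hji : j = i := by omega
        subst hji
        rw [hYcolj, hYcol_gt (j + 1) (by omega) (by omega)]
        simp only [Nat.add_sub_cancel]
        refine Set.ssubset_iff_subset_ne.mpr ⟨?_, ?_⟩
        · apply Set.union_subset
          · exact colourSet_mono Δ (barU_mono (by omega))
          · exact hNsub.trans Set.diff_subset
        · intro heq
          apply hgood
          apply Set.Subset.antisymm hNsub
          rintro c ⟨hc1, hc2⟩
          rw [← heq] at hc1
          rcases hc1 with hc1 | hc1
          · exact absurd hc1 hc2
          · exact hc1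
  · -- condition (4)
    intro i hi w hw
    rcases Nat.lt_trichotomy (i + 1) j with h | h | h
    · rw [hYlt (i + 1) h] at hw
      rw [hYcol_lt (i + 1) h, hYcol_lt i (by omega), hYbar_lt i (by omega)]
      exact hcond4 i (by omega) w hw
    · have hwv : w = v := by rw [h, hYj] at hw; exact hw
      subst hwv
      have hji : j - 1 = i := by omega
      rw [hYbar_lt i (by omega), h, hYcolj, hji,
        Set.union_diff_left, newCols_eq, sdiff_idem]
    · have hYi1 : Y (i + 1) = X i := by rw [hYgt (i + 1) h]; simp
      rw [hYi1] at hw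
      have hwv : w ≠ v := fun hh => hvX i (by omega) (hh ▸ hw)
      rcases Nat.eq_or_lt_of_le (show j ≤ i by omega) with hji | hji
      · -- i = j
        subst hji
        rw [hYcol_gt (j + 1) (by omega) (by omega), hYcolj, hYbar_ge j le_rfl]
        simp only [Nat.add_sub_cancel]
        have hcolA : colourSet Δ (barU X (j - 1) ∪ {v}) =
            colourSet Δ (barU X (j - 1)) ∪ newCols Δ v (barU X (j - 1)) := by
          rw [← hYbar_ge j le_rfl]; exact hYcolj
        rw [newCols_eq, toCols_union, toCols_sing Δ (show v ≠ w from fun hh => hwv hh.symm),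
          hcolA]
        have e : j - 1 + 1 = j := by omega
        have h4 : toCols Δ w (barU X (j - 1)) \ colourSet Δ (barU X (j - 1)) =
            colourSet Δ (barU X j) \ colourSet Δ (barU X (j - 1)) := by
          rw [← newCols_eq]
          have := hcond4 (j - 1) (by omega) w (by rw [e]; exact hw)
          rwa [e] at this
        have hcw : edgeCol Δ w v ∈ colourSet Δ (barU X j) := by
          have hmem : edgeCol Δ v w ∈ toCols Δ v (barU X j) :=
            ⟨w, subset_barU X le_rfl hw, hwv, rfl⟩
          have := htC j le_rfl hjle hmem
          rwa [edgeCol_symm] at this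
        ext c
        simp only [Set.mem_diff, Set.mem_union, Set.mem_singleton_iff]
        have h4c : c ∈ toCols Δ w (barU X (j - 1)) ∧ c ∉ colourSet Δ (barU X (j - 1)) ↔
            c ∈ colourSet Δ (barU X j) ∧ c ∉ colourSet Δ (barU X (j - 1)) := by
          rw [← Set.mem_diff, ← Set.mem_diff, h4]
        have h2c : c = edgeCol Δ w v → c ∈ colourSet Δ (barU X j) := fun hh => hh ▸ hcw
        tauto
      · -- j < i
        rw [hYcol_gt i (by omega) (by omega), hYcol_gt (i + 1) (by omega) (by omega),
          hYbar_ge i (by omega)]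
        simp only [Nat.add_sub_cancel]
        have hcolA : colourSet Δ (barU X (i - 1) ∪ {v}) = colourSet Δ (barU X (i - 1)) := by
          have := hYcol_gt i (by omega) (by omega)
          rwa [hYbar_ge i (by omega)] at this
        rw [newCols_eq, toCols_union, toCols_sing Δ (show v ≠ w from fun hh => hwv hh.symm),
          hcolA, Set.union_diff_distrib]
        have e : i - 1 + 1 = i := by omega
        have h4 : toCols Δ w (barU X (i - 1)) \ colourSet Δ (barU X (i - 1)) =
            colourSet Δ (barU X i) \ colourSet Δ (barU X (i - 1)) := by
          rw [← newCols_eq]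
          have := hcond4 (i - 1) (by omega) w (by rw [e]; exact hw)
          rwa [e] at this
        rw [h4, Set.union_eq_left]
        rintro c ⟨hc1, hc2⟩
        have hcw : edgeCol Δ w v ∈ colourSet Δ (barU X i) := by
          have hmem : edgeCol Δ v w ∈ toCols Δ v (barU X i) :=
            ⟨w, subset_barU X le_rfl hw, hwv, rfl⟩
          have := htC i (by omega) (by omega) hmem
          rwa [edgeCol_symm] at this
        exact ⟨by rw [Set.mem_singleton_iff.mp hc1]; exact hcw, hc2⟩
  · exact hfin.subset hsubY
  · exact le_trans (Set.ncard_le_ncard hsubY hfin) hcard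
  · -- LexLT
    refine ⟨j - 1, by omega, fun l hl => ?_, ?_⟩
    · simp only [rank]
      rw [hYcol_lt (l + 1) (by omega), hYcol_lt l (by omega)]
    · simp only [rank]
      have e : j - 1 + 1 = j := by omega
      rw [e, hYcolj, hYcol_lt (j - 1) (by omega)]
      have hNN : (colourSet Δ (barU X (j - 1)) ∪ newCols Δ v (barU X (j - 1))) \
          colourSet Δ (barU X (j - 1)) = newCols Δ v (barU X (j - 1)) := by
        rw [Set.union_diff_left, newCols_eq, sdiff_idem]
      rw [hNN]
      apply Set.ncard_lt_ncard
      · exact Set.ssubset_iff_subset_ne.mpr ⟨hNsub, hgood⟩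
      · exact hfin.subset (Set.diff_subset.trans (colourSet_mono Δ (barU_mono hjle)))

/-- **Lemma 7.** Let `X` be an `n`-homogeneous tuple of minimal lexicographic rank and let
`v ∉ X̄ₙ` satisfy `N_Δ(v, X̄ₙ) = ∅`. Then there is an `n`-homogeneous tuple `X'` with
`X'ⱼ = Xⱼ ∪ {v}` for some `j ∈ [n]` and `X'ᵢ = Xᵢ` for all other `i ∈ [n]`. -/
theorem minimal_rank_absorb (k n : ℕ) (hn : 2 ≤ n) (Δ : ℕ → ℕ → ℕ)
    (hΔ : IsColouring Δ k) (X : ℕ → Set ℕ) (hX : Homog Δ n X)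
    (hmin : ∀ Y : ℕ → Set ℕ, Homog Δ n Y → ¬ LexLT (n - 1) (rank Δ Y) (rank Δ X))
    (v : ℕ) (hv : v ∉ barU X (n - 1)) (hnew : newCols Δ v (barU X (n - 1)) = ∅) :
    ∃ X' : ℕ → Set ℕ, Homog Δ n X' ∧ ∃ j < n,
      X' j = X j ∪ {v} ∧ ∀ i < n, i ≠ j → X' i = X i := by
  classical
  set Q : ℕ → Prop := fun j => ∀ i, j ≤ i → i ≤ n - 1 → newCols Δ v (barU X i) = ∅
    with hQdef
  have hQtop : Q (n - 1) := fun i h1 h2 => by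
    rw [le_antisymm h2 h1]; exact hnew
  obtain ⟨j, hQj, hjmin⟩ : ∃ j, Q j ∧ ∀ m < j, ¬ Q m :=
    ⟨Nat.find ⟨n - 1, hQtop⟩, Nat.find_spec ⟨n - 1, hQtop⟩,
      fun m hm => Nat.find_min ⟨n - 1, hQtop⟩ hm⟩
  have hjle : j ≤ n - 1 := not_lt.mp fun h => hjmin (n - 1) h hQtop
  have htC : ∀ i, j ≤ i → i ≤ n - 1 → toCols Δ v (barU X i) ⊆ colourSet Δ (barU X i) := by
    intro i h1 h2
    have h := hQj i h1 h2
    rw [newCols_eq, Set.diff_eq_empty] at h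
    exact h
  by_cases hj0 : j = 0
  · exact absorb_lemma Δ n hn X hX v hv 0 (by omega)
      (fun i h1 h2 => htC i (by omega) h2) (Or.inl rfl)
  · have hNne : newCols Δ v (barU X (j - 1)) ≠ ∅ := by
      intro hcon
      apply hjmin (j - 1) (by omega)
      intro i h1 h2
      rcases Nat.lt_or_ge i j with h | h
      · rw [show i = j - 1 by omega]; exact hcon
      · exact hQj i h h2
    by_cases hgood : newCols Δ v (barU X (j - 1)) =
        colourSet Δ (barU X j) \ colourSet Δ (barU X (j - 1))
    · exact absorb_lemma Δ n hn X hX v hv j hjle htC (Or.inr hgood)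
    · exfalso
      obtain ⟨Y, hYhom, hYlex⟩ :=
        shift_lemma Δ n hn X hX v hv j (by omega) hjle htC hNne hgood
      exact hmin Y hYhom hYlex
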